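/- For p ≥ 1, the polylogarithm satisfies Jonquière's inversion formula: Li_p(1/x) = (-1)^{p+1} Li_p(x) + (-1)^{p+1} (2πi)^p / p! · B_p(log x / (2πi)), for x in the open unit disk with Im(x) < 0, where log x = Log x + 2πi (Log being the principal branch) and Li_p(1/x) is defined by analytic continuation along a path from x to 1/x crossing the real axis once, not intersecting (1,∞), and avoiding 1. -/

import Mathlib

open Complex

/-- The slit plane `ℂ \ [1,∞)`, on which the analytic continuation of the
polylogarithm is single-valued. -/
def polylogDomain : Set ℂ := {z : ℂ | ¬ (z.im = 0 ∧ 1 ≤ z.re)}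

/-!
For `p ≥ 2` both sides are holomorphic on the lower half-plane, which `z ↦ 1/z` maps into the
slit plane, so by the identity theorem it suffices to check the formula on the lower unit
semicircle `z = exp (2πiy)`, `1/2 < y < 1`. There `log z + 2πi = 2πiy`, the series of `Li_p`
converges absolutely on the closed disk and hence computes `L` at `z` and at `1/z`, and the
formula becomes the Fourier expansion of the Bernoulli polynomial on `[0, 1]`:
`∑_{n ≥ 1} (e^{2πiny} + (-1)^p e^{-2πiny}) / n^p = -(2πi)^p / p! · B_p(y)`.

For `p = 1`, `L z = -log (1 - z)` on the whole slit plane, and the formula reduces to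
`log (1 - 1/x) = log (1 - x) - log x - πi` for `Im x < 0`.
-/

open Set Filter Topology
open scoped Real

noncomputable def polylogSeries (p : ℕ) (z : ℂ) : ℂ :=
  ∑' k : ℕ, z ^ (k + 1) / ((k : ℂ) + 1) ^ p

noncomputable def jonquiereRHS (p : ℕ) (L : ℂ → ℂ) (z : ℂ) : ℂ :=
  (-1) ^ (p + 1) * L z +
    (-1) ^ (p + 1) * (2 * π * I) ^ p / (p.factorial : ℂ) *
      Polynomial.aeval ((Complex.log z + 2 * π * I) / (2 * π * I))
        (Polynomial.bernoulli p)

lemma polylogDomain_eq_preimage : polylogDomain = (fun z : ℂ => 1 - z) ⁻¹' slitPlane := by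
  ext z
  simp only [polylogDomain, mem_ofPred_eq, mem_preimage, mem_slitPlane_iff, sub_re, one_re,
    sub_im, one_im, zero_sub, neg_ne_zero, sub_pos, not_and_or, not_le]
  tauto

lemma mem_polylogDomain_of_im_ne_zero {z : ℂ} (hz : z.im ≠ 0) : z ∈ polylogDomain :=
  fun h => hz h.1

lemma mem_polylogDomain_of_re_lt_one {z : ℂ} (hz : z.re < 1) : z ∈ polylogDomain :=
  fun h => hz.not_ge h.2

lemma isOpen_polylogDomain : IsOpen polylogDomain :=
  polylogDomain_eq_preimage ▸ isOpen_slitPlane.preimage (by fun_prop)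

lemma isPreconnected_polylogDomain : IsPreconnected polylogDomain := by
  rw [polylogDomain_eq_preimage, ← image_eq_preimage_of_inverse (f := fun z : ℂ => 1 - z)
    (fun z => sub_sub_cancel 1 z) (fun z => sub_sub_cancel 1 z)]
  exact (starConvex_one_slitPlane.isPathConnected one_mem_slitPlane).isConnected.isPreconnected
    |>.image _ (by fun_prop : Continuous fun z : ℂ => 1 - z).continuousOn

lemma im_inv_pos_of_im_neg {z : ℂ} (hz : z.im < 0) : 0 < z⁻¹.im := by
  rw [inv_im]
  exact div_pos (neg_pos.mpr hz) (normSq_pos.mpr fun h => hz.ne (by simp [h]))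

lemma aeval_ofReal_bernoulli (p : ℕ) (y : ℝ) :
    Polynomial.aeval (y : ℂ) (Polynomial.bernoulli p) = bernoulliFun p y := by
  rw [bernoulliFun, Polynomial.eval_map_algebraMap]
  exact Polynomial.aeval_algebraMap_apply ℂ y _

section

variable {p : ℕ} {L : ℂ → ℂ}

lemma norm_polylogTerm_le {z : ℂ} (hz : ‖z‖ ≤ 1) (k : ℕ) :
    ‖z ^ (k + 1) / ((k : ℂ) + 1) ^ p‖ ≤ 1 / ((k : ℝ) + 1) ^ p := by
  rw [norm_div, norm_pow, norm_pow, show ((k : ℂ) + 1) = ((k + 1 : ℕ) : ℂ) by push_cast; ring,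
    norm_natCast]
  push_cast
  gcongr
  exact pow_le_one₀ (norm_nonneg z) hz

lemma summable_one_div_succ_pow (hp : 2 ≤ p) : Summable fun k : ℕ => 1 / ((k : ℝ) + 1) ^ p := by
  have := (summable_nat_add_iff 1).mpr (Real.summable_one_div_nat_pow.mpr (by omega : 1 < p))
  exact_mod_cast this

lemma continuousOn_polylogSeries (hp : 2 ≤ p) :
    ContinuousOn (polylogSeries p) (Metric.closedBall 0 1) :=
  continuousOn_tsum (fun _ => by fun_prop) (summable_one_div_succ_pow hp)
    fun k z hz => norm_polylogTerm_le (mem_closedBall_zero_iff.mp hz) k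

lemma eq_polylogSeries_of_norm_eq_one (hp : 2 ≤ p)
    (hagree : ∀ z : ℂ, ‖z‖ < 1 → L z = polylogSeries p z) {w : ℂ} (hw : ‖w‖ = 1)
    (hL : ContinuousAt L w) : L w = polylogSeries p w := by
  have hw_closure : w ∈ closure (Metric.ball (0 : ℂ) 1) := by
    rw [closure_ball _ one_ne_zero]; simpa using hw.le
  have := mem_closure_iff_nhdsWithin_neBot.mp hw_closure
  have hseries : Tendsto (polylogSeries p) (𝓝[Metric.ball 0 1] w) (𝓝 (polylogSeries p w)) :=
    ((continuousOn_polylogSeries hp) w (by simpa using hw.le)).mono Metric.ball_subset_closedBall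
  refine tendsto_nhds_unique (hL.tendsto.mono_left (nhdsWithin_le_nhds (s := Metric.ball 0 1))) ?_
  exact hseries.congr' (eventually_nhdsWithin_of_forall fun z hz =>
    (hagree z (mem_ball_zero_iff.mp hz)).symm)

lemma exp_two_pi_I_mul_eq_exp_ofReal_mul_I (y : ℝ) :
    exp (2 * π * I * y) = exp (↑(2 * π * y) * I) := by
  push_cast; ring_nf

lemma im_exp_two_pi_I_mul_neg {y : ℝ} (hy : y ∈ Ioo (1 / 2 : ℝ) 1) :
    (exp (2 * π * I * y)).im < 0 := by
  rw [exp_two_pi_I_mul_eq_exp_ofReal_mul_I, exp_ofReal_mul_I_im, ← Real.sin_sub_two_pi]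
  have := Real.pi_pos
  apply Real.sin_neg_of_neg_of_neg_pi_lt <;> nlinarith [hy.1, hy.2]

lemma log_exp_two_pi_I_mul {y : ℝ} (hy : y ∈ Ioc (1 / 2 : ℝ) (3 / 2)) :
    log (exp (2 * π * I * y)) = 2 * π * I * (y - 1) := by
  have hshift : exp (2 * π * I * y) = exp (2 * π * I * (y - 1)) := by
    rw [show 2 * π * I * y = 2 * π * I * (y - 1) + 2 * π * I by ring,
      exp_add, exp_two_pi_mul_I, mul_one]
  have him : (2 * π * I * (y - 1)).im = 2 * π * (y - 1) := by simp
  have := Real.pi_pos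
  rw [hshift, log_exp] <;> rw [him] <;> nlinarith [hy.1, hy.2]

lemma hasSum_polylogSeries (hp : 2 ≤ p) {w : ℂ} (hw : ‖w‖ ≤ 1) :
    HasSum (fun k : ℕ => w ^ (k + 1) / ((k : ℂ) + 1) ^ p) (polylogSeries p w) :=
  (Summable.of_norm_bounded (summable_one_div_succ_pow hp) (norm_polylogTerm_le hw)).hasSum

lemma polylogSeries_add_neg_one_pow_mul_inv (hp : 2 ≤ p) {y : ℝ}
    (hy : y ∈ Icc (0 : ℝ) 1) :
    polylogSeries p (exp (2 * π * I * y)) +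
        (-1) ^ p * polylogSeries p (exp (2 * π * I * y))⁻¹ =
      -(2 * π * I) ^ p / (p.factorial : ℂ) * bernoulliFun p y := by
  set z := exp (2 * π * I * y) with hz_def
  have hz : ‖z‖ = 1 := by
    rw [hz_def, exp_two_pi_I_mul_eq_exp_ofReal_mul_I, norm_exp_ofReal_mul_I]
  have hfourier_pow (n : ℕ) :
      fourier n (y : UnitAddCircle) = z ^ n ∧ fourier (-n) (y : UnitAddCircle) = z⁻¹ ^ n := by
    simp only [hz_def, fourier_coe_apply, ← exp_neg, ← exp_nat_mul]
    constructor <;> congr 1 <;> push_cast <;> ring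
  have hfourier := (hasSum_nat_add_iff' 1).mpr (hasSum_one_div_nat_pow_mul_fourier hp hy)
  simp only [hfourier_pow, Finset.range_one, Finset.sum_singleton, CharP.cast_eq_zero,
    zero_pow (by omega : p ≠ 0), div_zero, zero_mul, sub_zero] at hfourier
  refine ((hasSum_polylogSeries hp hz.le).add ((hasSum_polylogSeries hp
    (by rw [norm_inv, hz, inv_one])).mul_left ((-1) ^ p))).unique (hfourier.congr_fun fun k => ?_)
  push_cast
  ring

lemma jonquiere_on_lower_semicircle (hp : 2 ≤ p)
    (hL : ContinuousOn L polylogDomain)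
    (hagree : ∀ z : ℂ, ‖z‖ < 1 → L z = polylogSeries p z) {y : ℝ}
    (hy : y ∈ Ioo (1 / 2 : ℝ) 1) :
    L (exp (2 * π * I * y))⁻¹ = jonquiereRHS p L (exp (2 * π * I * y)) := by
  set z := exp (2 * π * I * y) with hz_def
  have hz : ‖z‖ = 1 := by
    rw [hz_def, exp_two_pi_I_mul_eq_exp_ofReal_mul_I, norm_exp_ofReal_mul_I]
  have him : z.im < 0 := im_exp_two_pi_I_mul_neg hy
  have hcont {w : ℂ} (hw : w.im ≠ 0) : ContinuousAt L w :=
    hL.continuousAt (isOpen_polylogDomain.mem_nhds (mem_polylogDomain_of_im_ne_zero hw))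
  have harg : (log z + 2 * π * I) / (2 * π * I) = y := by
    rw [hz_def, log_exp_two_pi_I_mul ⟨hy.1, by linarith [hy.2]⟩]
    field_simp
    ring
  have hsign : ((-1 : ℂ) ^ p) ^ 2 = 1 := by rw [← pow_mul, mul_comm, pow_mul]; norm_num
  rw [jonquiereRHS, harg, aeval_ofReal_bernoulli,
    eq_polylogSeries_of_norm_eq_one hp hagree hz (hcont him.ne),
    eq_polylogSeries_of_norm_eq_one hp hagree (by rw [norm_inv, hz, inv_one])
      (hcont (im_inv_pos_of_im_neg him).ne')]
  linear_combination (-1) ^ p * polylogSeries_add_neg_one_pow_mul_inv hp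
      ⟨by linarith [hy.1], hy.2.le⟩
    - polylogSeries p z⁻¹ * hsign

lemma analyticOnNhd_comp_inv (hL : AnalyticOnNhd ℂ L polylogDomain) :
    AnalyticOnNhd ℂ (fun z => L z⁻¹) {z : ℂ | z.im < 0} := fun z (hz : z.im < 0) =>
  (hL _ (mem_polylogDomain_of_im_ne_zero (im_inv_pos_of_im_neg hz).ne')).fun_comp
    (analyticAt_inv fun h => hz.ne (by simp [h]))

lemma analyticOnNhd_jonquiereRHS (hL : AnalyticOnNhd ℂ L polylogDomain) :
    AnalyticOnNhd ℂ (jonquiereRHS p L) {z : ℂ | z.im < 0} := fun z (hz : z.im < 0) => by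
  have hlog : AnalyticAt ℂ log z := analyticAt_clog (mem_slitPlane_iff.mpr (Or.inr hz.ne))
  exact (analyticAt_const.mul (hL z (mem_polylogDomain_of_im_ne_zero hz.ne))).add
    (analyticAt_const.mul (((hlog.add analyticAt_const).div_const).aeval_polynomial _))

lemma tendsto_exp_two_pi_I_mul_nhdsNE (y₀ : ℝ) :
    Tendsto (fun y : ℝ => exp (2 * π * I * y)) (𝓝[≠] y₀)
      (𝓝[≠] (exp (2 * π * I * y₀))) :=
  ((hasDerivAt_id y₀).ofReal_comp.const_mul (2 * π * I)).cexp.tendsto_nhdsNE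
    (by simp [exp_ne_zero, Real.pi_ne_zero])

lemma jonquiere_of_two_le (hp : 2 ≤ p) (hL : AnalyticOnNhd ℂ L polylogDomain)
    (hagree : ∀ z : ℂ, ‖z‖ < 1 → L z = polylogSeries p z) {x : ℂ} (hx : x.im < 0) :
    L x⁻¹ = jonquiereRHS p L x := by
  have hfreq : ∃ᶠ z in 𝓝[≠] exp (2 * π * I * (3 / 4 : ℝ)), L z⁻¹ = jonquiereRHS p L z :=
    (tendsto_exp_two_pi_I_mul_nhdsNE _).frequently <| Eventually.frequently <|
      (eventually_nhdsWithin_of_eventually_nhds (Ioo_mem_nhds (by norm_num) (by norm_num))).mono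
        fun y hy => jonquiere_on_lower_semicircle hp hL.continuousOn hagree hy
  exact (analyticOnNhd_comp_inv hL).eqOn_of_preconnected_of_frequently_eq
    (analyticOnNhd_jonquiereRHS hL) (convex_halfSpace_im_lt 0).isPreconnected
    (im_exp_two_pi_I_mul_neg (by norm_num)) hfreq hx

lemma eqOn_neg_log_one_sub (hL : AnalyticOnNhd ℂ L polylogDomain)
    (hagree : ∀ z : ℂ, ‖z‖ < 1 → L z = polylogSeries 1 z) :
    EqOn L (fun z => -log (1 - z)) polylogDomain := by
  have hlog : AnalyticOnNhd ℂ (fun z => -log (1 - z)) polylogDomain := fun z hz =>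
    ((analyticAt_const.sub analyticAt_id).clog (polylogDomain_eq_preimage.subset hz)).neg
  refine hL.eqOn_of_preconnected_of_eventuallyEq hlog isPreconnected_polylogDomain
    (mem_polylogDomain_of_re_lt_one (z := 0) (by simp)) ?_
  filter_upwards [Metric.ball_mem_nhds (0 : ℂ) one_pos] with z hz
  rw [hagree z (mem_ball_zero_iff.mp hz), polylogSeries]
  simpa using (hasSum_taylorSeries_neg_log' (mem_ball_zero_iff.mp hz)).tsum_eq

lemma log_one_sub_inv {x : ℂ} (hx : x.im < 0) :
    log (1 - x⁻¹) = log (1 - x) - log x - π * I := by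
  have hx0 : x ≠ 0 := fun h => hx.ne (by simp [h])
  have h1x : 1 - x ≠ 0 := fun h => hx.ne (by simpa using congrArg im h)
  have harg_x : -π < arg x ∧ arg x < 0 := ⟨neg_pi_lt_arg x, arg_neg_iff.mpr hx⟩
  have harg_1x : 0 ≤ arg (1 - x) ∧ arg (1 - x) < π :=
    ⟨arg_nonneg_iff.mpr (by simp; linarith),
      arg_lt_pi_iff.mpr (Or.inr (by simp; linarith))⟩
  have him : (log (1 - x) - log x - π * I).im = arg (1 - x) - arg x - π := by
    simp [log_im]
  rw [← log_exp (x := log (1 - x) - log x - π * I) (by rw [him]; linarith)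
    (by rw [him]; linarith), exp_sub, exp_sub, exp_log h1x, exp_log hx0, exp_pi_mul_I]
  congr 1
  field_simp
  ring

lemma jonquiere_one (hL : AnalyticOnNhd ℂ L polylogDomain)
    (hagree : ∀ z : ℂ, ‖z‖ < 1 → L z = polylogSeries 1 z) {x : ℂ} (hx : x.im < 0) :
    L x⁻¹ = jonquiereRHS 1 L x := by
  rw [jonquiereRHS, eqOn_neg_log_one_sub hL hagree
      (mem_polylogDomain_of_im_ne_zero (im_inv_pos_of_im_neg hx).ne'),
    eqOn_neg_log_one_sub hL hagree (mem_polylogDomain_of_im_ne_zero hx.ne)]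
  dsimp only
  rw [log_one_sub_inv hx, Polynomial.bernoulli_one]
  simp only [map_sub, Polynomial.aeval_X, Polynomial.aeval_C, map_inv₀, map_ofNat]
  field_simp
  ring

end

theorem stmt2_general (p : ℕ) (hp : 1 ≤ p) (L : ℂ → ℂ)
    (hL : AnalyticOn ℂ L polylogDomain)
    (hagree : ∀ z : ℂ, ‖z‖ < 1 → L z = ∑' k : ℕ, z ^ (k + 1) / ((k : ℂ) + 1) ^ p)
    (x : ℂ) (hxim : x.im < 0) :
    L x⁻¹ = (-1) ^ (p + 1) * L x +
      (-1) ^ (p + 1) * (2 * Real.pi * I) ^ p / (p.factorial : ℂ) *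
        Polynomial.aeval ((Complex.log x + 2 * Real.pi * I) / (2 * Real.pi * I))
          (Polynomial.bernoulli p) := by
  have hL' := isOpen_polylogDomain.analyticOn_iff_analyticOnNhd.mp hL
  obtain rfl | hp2 := hp.eq_or_lt
  · exact jonquiere_one hL' hagree hxim
  · exact jonquiere_of_two_le hp2 hL' hagree hxim

/-- Jonquière's inversion formula.  If `L` is the analytic continuation of the
polylogarithm `Li_p` (defined by its series on the unit disk) to `ℂ \ [1,∞)`,
then for `|x| < 1` with `Im x < 0` (so that the continuation from `x` to `1/x`
along a path crossing the real axis once to the left of `1` stays in `ℂ \ [1,∞)`,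
and the relevant branch of the logarithm is `Log x + 2πi`):
`Li_p(1/x) = (-1)^{p+1} Li_p(x) + (-1)^{p+1} (2πi)^p/p! · B_p(log x/(2πi))`. -/
theorem stmt2 (p : ℕ) (hp : 1 ≤ p) (L : ℂ → ℂ)
    (hL : AnalyticOn ℂ L polylogDomain)
    (hagree : ∀ z : ℂ, ‖z‖ < 1 → L z = ∑' k : ℕ, z ^ (k + 1) / ((k : ℂ) + 1) ^ p)
    (x : ℂ) (hx : ‖x‖ < 1) (hxim : x.im < 0) :
    L x⁻¹ = (-1) ^ (p + 1) * L x +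
      (-1) ^ (p + 1) * (2 * Real.pi * I) ^ p / (p.factorial : ℂ) *
        Polynomial.aeval ((Complex.log x + 2 * Real.pi * I) / (2 * Real.pi * I))
          (Polynomial.bernoulli p) :=
  stmt2_general p hp L hL hagree x hxim
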